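/- A rank-one free module L = H·e over a cocommutative Hopf algebra H, with pseudobracket [e * e] = α ⊗_H e for α ∈ H ⊗ H, is a Lie pseudoalgebra if and only if α satisfies: (i) α = −σ(α), where σ is the flip, and (ii) (α ⊗ 1)·(Δ ⊗ id)(α) = (1 ⊗ α)·(id ⊗ Δ)(α) − (σ ⊗ id)((1 ⊗ α)·(id ⊗ Δ)(α)). -/

import Mathlib

/-!
STATEMENT 8: A rank-one free module `L = H·e` over a cocommutative Hopf algebra `H`, with
pseudobracket `[e * e] = α ⊗_H e`, is a Lie pseudoalgebra iff
(i)  `α = −σ(α)`, and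
(ii) `(α ⊗ 1)(Δ ⊗ id)(α) = (1 ⊗ α)(id ⊗ Δ)(α) − (σ ⊗ id)((1 ⊗ α)(id ⊗ Δ)(α))`.

Since `L = H·e` is free of rank one, we use the canonical identifications
`(H ⊗ H) ⊗_H L ≅ H ⊗ H` and `H^{⊗3} ⊗_H L ≅ H^{⊗3}` (where `u ⊗_H e ↦ u`); by
`H`-bilinearity the pseudobracket is `[f·e * g·e] = ((f ⊗ g)·α) ⊗_H e`.  Under these
identifications, skew-commutativity and the Jacobi identity of the pseudobracket become
the predicates `RankOneSkew` and `RankOneJacobi` below (the compositions of polylinear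
maps in `H^{⊗3} ⊗_H L` being computed via the comultiplication, as in
Beilinson–Drinfeld).
-/

open TensorProduct

noncomputable section

variable (k H : Type*) [Field k] [Ring H] [HopfAlgebra k H]

/-- The flip `σ` of `H ⊗ H`. -/
def flipT : H ⊗[k] H →ₗ[k] H ⊗[k] H := (TensorProduct.comm k H H).toLinearMap

/-- `id ⊗ Δ : H ⊗ H → H ⊗ (H ⊗ H)`. -/
def idComul : H ⊗[k] H →ₗ[k] H ⊗[k] (H ⊗[k] H) :=
  LinearMap.lTensor H (Coalgebra.comul : H →ₗ[k] H ⊗[k] H)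

/-- `Δ ⊗ id : H ⊗ H → H ⊗ (H ⊗ H)` (reassociated). -/
def comulId : H ⊗[k] H →ₗ[k] H ⊗[k] (H ⊗[k] H) :=
  (TensorProduct.assoc k H H H).toLinearMap ∘ₗ
    LinearMap.rTensor H (Coalgebra.comul : H →ₗ[k] H ⊗[k] H)

/-- `u ↦ u ⊗ 1 : H ⊗ H → H^{⊗3}` (in the first two factors). -/
def emb12 : H ⊗[k] H →ₗ[k] H ⊗[k] (H ⊗[k] H) :=
  (TensorProduct.assoc k H H H).toLinearMap ∘ₗ
    ((TensorProduct.mk k (H ⊗[k] H) H).flip 1)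

/-- `σ ⊗ id` on `H^{⊗3}`: the transposition of the first two factors. -/
def swap12 : H ⊗[k] (H ⊗[k] H) →ₗ[k] H ⊗[k] (H ⊗[k] H) :=
  (TensorProduct.assoc k H H H).toLinearMap
    ∘ₗ LinearMap.rTensor H (TensorProduct.comm k H H).toLinearMap
    ∘ₗ (TensorProduct.assoc k H H H).symm.toLinearMap

/-- Skew-commutativity `[b*a] = −(σ ⊗_H id) [a*b]` of the rank-one pseudobracket
`[f·e * g·e] = ((f⊗g)α) ⊗_H e`, under the identification `(H⊗H) ⊗_H (H·e) ≅ H⊗H`. -/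
def RankOneSkew (α : H ⊗[k] H) : Prop :=
  ∀ f g : H, (g ⊗ₜ[k] f) * α = - flipT k H ((f ⊗ₜ[k] g) * α)

/-- The Jacobi identity
`[a*[b*c]] − ((σ⊗id) ⊗_H id) [b*[a*c]] = [[a*b]*c]` for `a = f·e`, `b = g·e`, `c = h·e`,
under the identification `H^{⊗3} ⊗_H (H·e) ≅ H^{⊗3}`; the compositions are computed via
Beilinson–Drinfeld's formulas:
`[a*[b*c]] = (1 ⊗ (g⊗h)α)·(id⊗Δ)((f⊗1)α)`, `[[a*b]*c] = ((f⊗g)α ⊗ 1)·(Δ⊗id)((1⊗h)α)`. -/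
def RankOneJacobi (α : H ⊗[k] H) : Prop :=
  ∀ f g h : H,
    ((1 : H) ⊗ₜ[k] ((g ⊗ₜ[k] h) * α)) * idComul k H ((f ⊗ₜ[k] (1 : H)) * α)
      - swap12 k H (((1 : H) ⊗ₜ[k] ((f ⊗ₜ[k] h) * α)) * idComul k H ((g ⊗ₜ[k] (1 : H)) * α))
    = emb12 k H ((f ⊗ₜ[k] g) * α) * comulId k H (((1 : H) ⊗ₜ[k] h) * α)

/-! All five structure maps `σ`, `id ⊗ Δ`, `Δ ⊗ id`, `u ↦ u ⊗ 1` and `σ ⊗ id` are algebra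
homomorphisms of tensor-product algebras. Hence both sides of skew-commutativity at
`(f·e, g·e)` are `f ⊗ g` (up to `σ`) times their values at `(e, e)`, and all three terms of the
Jacobi identity at `(f·e, g·e, h·e)` are `f ⊗ g ⊗ h` (up to `σ ⊗ id`) times their values at
`(e, e, e)`. So each axiom holds for all elements iff it holds for `e`, which is (i) resp. (ii). -/

namespace RankOne

variable {k H}

theorem flipT_mul (x y : H ⊗[k] H) : flipT k H (x * y) = flipT k H x * flipT k H y :=
  map_mul (Algebra.TensorProduct.comm k H H) x y

theorem idComul_mul (x y : H ⊗[k] H) : idComul k H (x * y) = idComul k H x * idComul k H y :=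
  map_mul (Algebra.TensorProduct.lTensor H (Bialgebra.comulAlgHom k H)) x y

theorem comulId_mul (x y : H ⊗[k] H) : comulId k H (x * y) = comulId k H x * comulId k H y :=
  map_mul ((Algebra.TensorProduct.assoc k k k H H H).toAlgHom.comp
    (Algebra.TensorProduct.rTensor H (Bialgebra.comulAlgHom k H))) x y

theorem emb12_mul (x y : H ⊗[k] H) : emb12 k H (x * y) = emb12 k H x * emb12 k H y :=
  map_mul ((Algebra.TensorProduct.assoc k k k H H H).toAlgHom.comp
    Algebra.TensorProduct.includeLeft) x y

theorem swap12_mul (x y : H ⊗[k] (H ⊗[k] H)) :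
    swap12 k H (x * y) = swap12 k H x * swap12 k H y :=
  map_mul ((Algebra.TensorProduct.assoc k k k H H H).toAlgHom.comp
    ((Algebra.TensorProduct.rTensor H (Algebra.TensorProduct.comm k H H).toAlgHom).comp
      (Algebra.TensorProduct.assoc k k k H H H).symm.toAlgHom)) x y

@[simp] theorem flipT_tmul (a b : H) : flipT k H (a ⊗ₜ[k] b) = b ⊗ₜ[k] a := rfl

@[simp] theorem swap12_tmul (a b c : H) :
    swap12 k H (a ⊗ₜ[k] (b ⊗ₜ[k] c)) = b ⊗ₜ[k] (a ⊗ₜ[k] c) := rfl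

@[simp] theorem emb12_tmul (a b : H) : emb12 k H (a ⊗ₜ[k] b) = a ⊗ₜ[k] (b ⊗ₜ[k] (1 : H)) := rfl

@[simp] theorem idComul_tmul_one (a : H) :
    idComul k H (a ⊗ₜ[k] (1 : H)) = a ⊗ₜ[k] (1 : H ⊗[k] H) := by
  simp [idComul, Algebra.TensorProduct.one_def]

@[simp] theorem comulId_one_tmul (a : H) :
    comulId k H ((1 : H) ⊗ₜ[k] a) = (1 : H) ⊗ₜ[k] ((1 : H) ⊗ₜ[k] a) := by
  simp [comulId, Algebra.TensorProduct.one_def]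

theorem commute_emb12_one_tmul_one_tmul (x : H ⊗[k] H) (a : H) :
    Commute (emb12 k H x) ((1 : H) ⊗ₜ[k] ((1 : H) ⊗ₜ[k] a)) := by
  have : Commute (x ⊗ₜ[k] (1 : H)) ((1 : H ⊗[k] H) ⊗ₜ[k] a) := by
    simp only [Commute, SemiconjBy, Algebra.TensorProduct.tmul_mul_tmul, one_mul, mul_one]
  exact this.map (Algebra.TensorProduct.assoc k k k H H H)

theorem bracket_bracket_right_eq (α : H ⊗[k] H) (f g h : H) :
    ((1 : H) ⊗ₜ[k] ((g ⊗ₜ[k] h) * α)) * idComul k H ((f ⊗ₜ[k] (1 : H)) * α) =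
      (f ⊗ₜ[k] (g ⊗ₜ[k] h)) * (((1 : H) ⊗ₜ[k] α) * idComul k H α) := by
  simp only [idComul_mul, idComul_tmul_one, ← mul_assoc, Algebra.TensorProduct.tmul_mul_tmul,
    one_mul, mul_one]

theorem bracket_bracket_left_eq (α : H ⊗[k] H) (f g h : H) :
    emb12 k H ((f ⊗ₜ[k] g) * α) * comulId k H (((1 : H) ⊗ₜ[k] h) * α) =
      (f ⊗ₜ[k] (g ⊗ₜ[k] h)) * (emb12 k H α * comulId k H α) := by
  rw [emb12_mul, comulId_mul, comulId_one_tmul, mul_assoc, ← mul_assoc (emb12 k H α),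
    (commute_emb12_one_tmul_one_tmul α h).eq]
  simp only [emb12_tmul, ← mul_assoc, Algebra.TensorProduct.tmul_mul_tmul,
    one_mul, mul_one]

theorem rankOneSkew_iff (α : H ⊗[k] H) : RankOneSkew k H α ↔ α = -flipT k H α := by
  refine ⟨fun hskew => by simpa only [← Algebra.TensorProduct.one_def, one_mul] using hskew 1 1,
    fun hα f g => ?_⟩
  rw [flipT_mul, flipT_tmul, ← mul_neg, ← hα]

theorem rankOneJacobi_iff (α : H ⊗[k] H) :
    RankOneJacobi k H α ↔
      emb12 k H α * comulId k H α =
        ((1 : H) ⊗ₜ[k] α) * idComul k H α - swap12 k H (((1 : H) ⊗ₜ[k] α) * idComul k H α) := by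
  refine ⟨fun hjac => by
    simpa only [← Algebra.TensorProduct.one_def, one_mul] using (hjac 1 1 1).symm,
    fun hα f g h => ?_⟩
  rw [bracket_bracket_right_eq, bracket_bracket_right_eq, swap12_mul, swap12_tmul,
    bracket_bracket_left_eq, hα, mul_sub]

end RankOne

theorem rank_one_lie_pseudoalgebra_iff
    (α : H ⊗[k] H) :
    (RankOneSkew k H α ∧ RankOneJacobi k H α) ↔
      (α = - flipT k H α ∧
        emb12 k H α * comulId k H α =
          ((1 : H) ⊗ₜ[k] α) * idComul k H α
            - swap12 k H (((1 : H) ⊗ₜ[k] α) * idComul k H α)) :=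
  and_congr (RankOne.rankOneSkew_iff α) (RankOne.rankOneJacobi_iff α)

end
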